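/- arXiv:0811.1103 — 3 statements merged into one kernel-verified Lean document; each statement's English description precedes it below -/
import Mathlib

section
/- Completeness of the saturation sequence: for every configuration ⟨p^j, γ⟩ ∈ Pre*(C_Init) there exists some i such that γ ∈ L(A_i^{q^j}). -/
namespace Order2

/-! Order-2 APDSs, 2-store multi-automata (in pooled form) and the
backwards-reachability saturation construction of Hague–Ong. -/

/-- 1-stores -/
abbrev Store1 (α : Type) := List α

/-- 2-stores: the topmost 1-store together with the rest (hence nonempty) -/
abbrev Store2 (α : Type) := List α × List (List α)

/-- the operations of `O_2` -/
inductive Op2 (α : Type) where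
  | pushw : List α → Op2 α
  | push2 : Op2 α
  | pop2 : Op2 α

/-- partial application of an operation to a 2-store -/
def Op2.apply {α : Type} : Op2 α → Store2 α → Option (Store2 α)
  | .pushw w, s =>
      match s.1 with
      | [] => none
      | _ :: t => some (w ++ t, s.2)
  | .push2, s => some (s.1, s.1 :: s.2)
  | .pop2, s =>
      match s.2 with
      | [] => none
      | r :: rs => some (r, rs)

def top1 {α : Type} (s : Store2 α) : Option α := s.1.head?

/-- configurations; `none` is the undefined store `∇` -/
abbrev Conf (P α : Type) := P × Option (Store2 α)

/-- commands of an order-2 APDS -/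
abbrev Cmds (P α : Type) := Set (P × α × Set (Op2 α × P))

/-- `⟨p,γ⟩ ↪ C` -/
def ConfStep {P α : Type} (D : Cmds P α) (c : Conf P α) (C : Set (Conf P α)) : Prop :=
  ∃ p γ a OP, c = (p, some γ) ∧ (p, a, OP) ∈ D ∧ top1 γ = some a ∧
    C = {c' | ∃ o p' δ, (o, p') ∈ OP ∧ Op2.apply o γ = some δ ∧ c' = (p', some δ)}
      ∪ {c' | (∃ o p', (o, p') ∈ OP ∧ Op2.apply o γ = none) ∧ c' = (p, none)}

/-- `↪` extended to sets of configurations -/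
def SetStep {P α : Type} (D : Cmds P α) (X Y : Set (Conf P α)) : Prop :=
  ∃ c C C', ConfStep D c C ∧ c ∉ C' ∧ X = insert c C' ∧ Y = C' ∪ C

/-- `Pre*(C_Init)` -/
def PreStar {P α : Type} (D : Cmds P α) (CI : Set (Conf P α)) : Set (Conf P α) :=
  {c | ∃ C, Relation.ReflTransGen (SetStep D) {c} C ∧ C ⊆ CI}

/-- identifiers `G̃_{(q₁,Q₂)}` of the new order-2 transitions -/
abbrev Ident (Q : Type) := Q × Set Q

/-- the pool of order-1 states: the states `σB` of the disjoint union of the automata of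
`B` (the 1-store automata of `A_0` together with the `B^a_1`), plus one state
`g^i_{(q₁,Q₂)}` for every stage `i` and identifier -/
abbrev GQ (σB Q : Type) := σB ⊕ (ℕ × Ident Q)

/-- the elements `α_t` of the element sets: a reference `θ` to an automaton of
`B ∪ G̃^{i-1}` (given by its initial state in the pool), or a triple `(a, push_w, θ)` -/
inductive Elem (α σB Q : Type) where
  | ref : GQ σB Q → Elem α σB Q
  | push : α → List α → GQ σB Q → Elem α σB Q

/-- order-1 (pool) transition relations -/
abbrev Trans1 (α σB Q : Type) := Set (GQ σB Q × α × Set (GQ σB Q))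
/-- order-2 transition relations (labels are initial states in the pool) -/
abbrev Trans2 (α σB Q : Type) := Set (Q × GQ σB Q × Set Q)

/-- one alternating step of the order-1 (pool) automaton -/
def wstep {α σB Q : Type} (Δ : Trans1 α σB Q) (a : α) (S S' : Set (GQ σB Q)) : Prop :=
  ∃ f : GQ σB Q → Set (GQ σB Q),
    (∀ g ∈ S, (g, a, f g) ∈ Δ) ∧ S' = ⋃ g ∈ S, f g

/-- alternating run of the order-1 automaton over a 1-store -/
inductive wrun {α σB Q : Type} (Δ : Trans1 α σB Q) :
    Store1 α → Set (GQ σB Q) → Set (GQ σB Q) → Prop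
  | nil (S : Set (GQ σB Q)) : wrun Δ [] S S
  | cons {a : α} {w : Store1 α} {S S1 S2 : Set (GQ σB Q)} :
      wstep Δ a S S1 → wrun Δ w S1 S2 → wrun Δ (a :: w) S S2

/-- acceptance of a 1-store from the pool state `g`, w.r.t. final states `F` -/
def Acc1 {α σB Q : Type} (Δ : Trans1 α σB Q) (F : Set (GQ σB Q)) (g : GQ σB Q)
    (w : Store1 α) : Prop :=
  ∃ S, wrun Δ w {g} S ∧ S ⊆ F

/-- one alternating order-2 step reading the 1-store `γ` (each label must accept `γ`) -/
def step2 {α σB Q : Type} (Δ1 : Trans1 α σB Q) (F1 : Set (GQ σB Q)) (Δ2 : Trans2 α σB Q)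
    (γ : Store1 α) (S S' : Set Q) : Prop :=
  ∃ f : Q → GQ σB Q × Set Q,
    (∀ q ∈ S, (q, f q) ∈ Δ2 ∧ Acc1 Δ1 F1 (f q).1 γ) ∧ S' = ⋃ q ∈ S, (f q).2

/-- alternating order-2 run over a word of 1-stores -/
inductive run2 {α σB Q : Type} (Δ1 : Trans1 α σB Q) (F1 : Set (GQ σB Q))
    (Δ2 : Trans2 α σB Q) : List (Store1 α) → Set Q → Set Q → Prop
  | nil (S : Set Q) : run2 Δ1 F1 Δ2 [] S S
  | cons {γ : Store1 α} {w : List (Store1 α)} {S S1 S2 : Set Q} :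
      step2 Δ1 F1 Δ2 γ S S1 → run2 Δ1 F1 Δ2 w S1 S2 → run2 Δ1 F1 Δ2 (γ :: w) S S2

/-- one order-2 step recording only the set `θ̃` of labels used -/
def lstep {α σB Q : Type} (Δ2 : Trans2 α σB Q) (S : Set Q) (θ : Set (GQ σB Q))
    (S' : Set Q) : Prop :=
  ∃ f : Q → GQ σB Q × Set Q,
    (∀ q ∈ S, (q, f q) ∈ Δ2) ∧ θ = (fun q => (f q).1) '' S ∧ S' = ⋃ q ∈ S, (f q).2

/-- The fixed data of the construction: an order-2 APDS `D` over control states `P`, and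
the 2-store multi-automaton `A_0` presented in pooled form:  order-2 states `Q` with
initial states `qinit p`, final states `F2`, the distinguished states `q*_f` (`qfstar`)
and `q^ε_f` (`qfeps`), `∇`-transitions `nabla`;  order-2 transitions `Δ2B` labelled by
(the initial states of) 1-store automata whose disjoint union (together with the `B^a_1`,
with initial states `ba a`) is the order-1 automaton `G^0 = (Δ1B, F1B)` over states `σB`. -/
structure Setup (α P Q σB : Type) where
  D : Cmds P α
  qinit : P → Q
  F2 : Set Q
  qfstar : Q
  qfeps : Q
  nabla : Set Q
  Δ2B : Set (Q × σB × Set Q)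
  Δ1B : Set (σB × α × Set σB)
  F1B : Set σB
  ba : α → σB

/-- the base order-1 transitions, lifted to the pool -/
def liftB {α σB Q : Type} (Δ : Set (σB × α × Set σB)) : Trans1 α σB Q :=
  {t | ∃ s a T, (s, a, T) ∈ Δ ∧ t = (Sum.inl s, a, Sum.inl '' T)}

/-- the (fixed) set of final order-1 states -/
def F1 {α P Q σB : Type} (su : Setup α P Q σB) : Set (GQ σB Q) :=
  Sum.inl '' su.F1B

/-- the data of stage `i` of the construction: the set `gdom` of identifiers present in
`A_i`, the recipes `G̃^i` (`recipes`), and the order-1 pool automaton `G^i` (`Δ1`) -/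
structure Stage (α σB Q : Type) where
  gdom : Set (Ident Q)
  recipes : Ident Q → Set (Set (Elem α σB Q))
  Δ1 : Trans1 α σB Q

/-- the order-2 transitions of `A_i`: the `B`-labelled transitions of `A_0` plus one
transition `q₁ —G^i_{(q₁,Q₂)}→ Q₂` for each identifier present -/
def Δ2At {α P Q σB : Type} (su : Setup α P Q σB) (i : ℕ) (dom : Set (Ident Q)) :
    Trans2 α σB Q :=
  {t | ∃ q s T, (q, s, T) ∈ su.Δ2B ∧ t = (q, Sum.inl s, T)} ∪
  {t | ∃ id ∈ dom, t = (id.1, Sum.inr (i, id), id.2)}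

/-- the clause of condition (2) for a single pair `(o, p^{k_t})` of a command with top
symbol `a` and source control state `p` -/
def Clause {α P Q σB : Type} (su : Setup α P Q σB) (i : ℕ) (st : Stage α σB Q)
    (a : α) (p : P) (op : Op2 α × P) (Qt : Set Q) (Selt : Set (Elem α σB Q)) : Prop :=
  match op.1 with
  | .push2 =>
      ∃ θ1 θ2 Q', lstep (Δ2At su i st.gdom) {su.qinit op.2} θ1 Q' ∧
        lstep (Δ2At su i st.gdom) Q' θ2 Qt ∧
        Selt = insert (Elem.ref (Sum.inl (su.ba a))) (Elem.ref '' θ1 ∪ Elem.ref '' θ2)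
  | .pop2 =>
      Selt = {Elem.ref (Sum.inl (su.ba a))} ∧
        (Qt = {su.qinit op.2} ∨ (su.qinit p ∈ su.nabla ∧ Qt = {su.qfeps}))
  | .pushw w =>
      ∃ θ T, (su.qinit op.2, θ, T) ∈ Δ2At su i st.gdom ∧ Qt = T ∧
        Selt = {Elem.push a w θ}

/-- condition (2): the element sets `S = S₁ ∪ … ∪ S_m` contributed to the identifier
`G̃^{i+1}_{(q,Qs)}` by the commands of the APDS, given the runs of `A_i` -/
def NewRec {α P Q σB : Type} (su : Setup α P Q σB) (i : ℕ) (st : Stage α σB Q)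
    (q : Q) (Qs : Set Q) : Set (Set (Elem α σB Q)) :=
  {S | ∃ p a OP, (p, a, OP) ∈ su.D ∧ q = su.qinit p ∧
        ∃ f : Op2 α × P → Set Q × Set (Elem α σB Q),
          (∀ op ∈ OP, Clause su i st a p op (f op).1 (f op).2) ∧
          Qs = ⋃ op ∈ OP, (f op).1 ∧ S = ⋃ op ∈ OP, (f op).2}

/-- the identifiers of `A_{i+1}`: those already present in `A_i` together with those
introduced by condition (2) -/
def NewDom {α P Q σB : Type} (su : Setup α P Q σB) (i : ℕ) (st : Stage α σB Q) :
    Set (Ident Q) :=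
  st.gdom ∪ {id | ∃ S, S ∈ NewRec su i st id.1 id.2}

/-- the requirement on an element `α_t` in the definition of `T_{G̃}`: for a reference
`θ`, a transition of `G^i`; for `(a, push_w, θ)`, the letter must be `a` and `G^i` must
have a run over `w` from `q^θ` -/
def ElemClause {α σB Q : Type} (Δ1 : Trans1 α σB Q) (b : α) :
    Elem α σB Q → Set (GQ σB Q) → Prop
  | .ref θ, T => (θ, b, T) ∈ Δ1
  | .push a w θ, T => b = a ∧ wrun Δ1 w {θ} T

/-- `T_{G̃^j}` : the update of the order-1 pool automaton.  The state `g^j_{(q₁,Q₂)}`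
inherits the transitions of `g^{j-1}_{(q₁,Q₂)}`, and receives a new transition
`g^j_{(q₁,Q₂)} —b→ Q₁ ∪ … ∪ Q_r` for every element set `S = {α₁,…,α_r}` of the recipe,
with the `Q_t` given by `ElemClause`; all previous transitions are kept. -/
def TG {α σB Q : Type} (j : ℕ) (dom : Set (Ident Q))
    (R : Ident Q → Set (Set (Elem α σB Q))) (Δ1 : Trans1 α σB Q) : Trans1 α σB Q :=
  Δ1 ∪
  {t | ∃ id ∈ dom, ∃ a T, (Sum.inr (j - 1, id), a, T) ∈ Δ1 ∧
        t = (Sum.inr (j, id), a, T)} ∪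
  {t | ∃ id ∈ dom, ∃ (b : α) (S : Set (Elem α σB Q)) (f : Elem α σB Q → Set (GQ σB Q)),
        S ∈ R id ∧ (∀ e ∈ S, ElemClause Δ1 b e (f e)) ∧
        t = (Sum.inr (j, id), b, ⋃ e ∈ S, f e)}

/-- `T_D` : one step of the saturation, producing the data of `A_{i+1}` from `A_i` -/
def TD {α P Q σB : Type} (su : Setup α P Q σB) (i : ℕ) (st : Stage α σB Q) :
    Stage α σB Q :=
  { gdom := NewDom su i st
    recipes := fun id => NewRec su i st id.1 id.2
    Δ1 := TG (i + 1) (NewDom su i st) (fun id => NewRec su i st id.1 id.2) st.Δ1 }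

/-- the sequence of stages: `A_0` (no identifiers, `G^0` the disjoint union of `B`),
then `A_{i+1} = T_D(A_i)` -/
def stage {α P Q σB : Type} (su : Setup α P Q σB) : ℕ → Stage α σB Q
  | 0 => ⟨∅, fun _ => ∅, liftB su.Δ1B⟩
  | i + 1 => TD su i (stage su i)

/-- acceptance of a 2-store from the order-2 state `q` in `A_i` -/
def Acc2 {α P Q σB : Type} (su : Setup α P Q σB) (i : ℕ) (q : Q) (s : Store2 α) : Prop :=
  ∃ S, run2 (stage su i).Δ1 (F1 su) (Δ2At su i (stage su i).gdom) (s.1 :: s.2) {q} S ∧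
    S ⊆ su.F2

/-- `L(A_i)` as a set of configurations (with `⟨p,∇⟩ ∈ L(A_i)` iff `q^p —∇→ {q^ε_f}`) -/
def LangA {α P Q σB : Type} (su : Setup α P Q σB) (i : ℕ) : Set (Conf P α) :=
  {c | (∃ s, c.2 = some s ∧ Acc2 su i (su.qinit c.1) s) ∨
       (c.2 = none ∧ su.qinit c.1 ∈ su.nabla)}

/-- well-formedness of `A_0`: `q^ε_f` is final with no outgoing transitions, the initial
states are pairwise distinct, non-final, with no incoming transitions; all 2-stores are
accepted from `q*_f`; and `B^a_1` (with initial state `ba a`) accepts exactly the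
1-stores with `top₁ = a` -/
def Setup.WF {α P Q σB : Type} (su : Setup α P Q σB) : Prop :=
  su.qfeps ∈ su.F2 ∧
  (∀ x T, (su.qfeps, x, T) ∉ su.Δ2B) ∧
  Function.Injective su.qinit ∧
  (∀ p, su.qinit p ∉ su.F2) ∧
  (∀ p, su.qinit p ≠ su.qfeps) ∧
  (∀ q x T p, (q, x, T) ∈ su.Δ2B → su.qinit p ∉ T) ∧
  (∀ s : Store2 α, Acc2 su 0 su.qfstar s) ∧
  (∀ (a : α) (w : Store1 α),
      Acc1 (liftB su.Δ1B) (F1 su) (Sum.inl (su.ba a)) w ↔ w.head? = some a)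

/-- the substitution `[j/i]` on pool states: replace the identifier superscript `i`
by `j` -/
def substGQ {σB Q : Type} (j i : ℕ) : GQ σB Q → GQ σB Q
  | .inl s => .inl s
  | .inr (i', id) => .inr (if i' = i then j else i', id)

/-- `[j/i]` on elements -/
def substElem {α σB Q : Type} (j i : ℕ) : Elem α σB Q → Elem α σB Q
  | .ref θ => .ref (substGQ j i θ)
  | .push a w θ => .push a w (substGQ j i θ)

/-- `[j/i]` on element sets -/
def substS {α σB Q : Type} (j i : ℕ) (S : Set (Elem α σB Q)) : Set (Elem α σB Q) :=
  substElem j i '' S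

/-- `G̃^i ≃ G̃^{i₁}` : the two stages have identifiers for exactly the same pairs, and
corresponding recipes agree up to the index substitution (`≲` in both directions) -/
def SimeqAt {α P Q σB : Type} (su : Setup α P Q σB) (i1 i : ℕ) : Prop :=
  (stage su i).gdom = (stage su i1).gdom ∧
  ∀ id ∈ (stage su i).gdom,
    (∀ S ∈ (stage su i).recipes id, substS (i1 - 1) (i - 1) S ∈ (stage su i1).recipes id) ∧
    (∀ S ∈ (stage su i1).recipes id, substS (i - 1) (i1 - 1) S ∈ (stage su i).recipes id)

/-- the fixed-state sequence `Ĝ^{i₁}, Ĝ^{i₁+1}, …` (indexed here by the offset from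
`i₁`): `Ĝ^{i₁} = G^{i₁}` and `Ĝ^{i+1} = T_{G̃^{i₁}[i₁/i₁-1]}(Ĝ^i)`, so that no new
states are added -/
def hatSeq {α P Q σB : Type} (su : Setup α P Q σB) (i1 : ℕ) : ℕ → Trans1 α σB Q
  | 0 => (stage su i1).Δ1
  | m + 1 =>
      TG i1 (stage su i1).gdom
        (fun id => substS i1 (i1 - 1) '' (stage su i1).recipes id)
        (hatSeq su i1 m)

end Order2

/-! If `⟨p, γ⟩ ↪ C` by a command `(p, a, OP)` and `C ⊆ L(A_i)`, the accepting runs of `A_i`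
from the successors of `γ` provide, operation by operation, the element sets and target
states demanded by condition (2). So `A_{i+1}` has a new transition from `q^p` whose label
accepts the top 1-store of `γ`, followed by an accepting run of `A_i` on the remaining
1-stores. Since `L(A_i) ⊆ L(A_{i+1})`, induction along a derivation `⟨p, γ⟩ ↪* C ⊆ C_Init`
finishes the proof. -/

namespace Order2

theorem exists_fun_of_forall_mem {ι Y : Type*} [Nonempty (ι → Y)] {s : Set ι}
    {R : ι → Y → Prop} (h : ∀ x ∈ s, ∃ y, R x y) : ∃ f : ι → Y, ∀ x ∈ s, R x (f x) := by
  classical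
  obtain ⟨d⟩ := ‹Nonempty (ι → Y)›
  exact ⟨fun x => if hx : x ∈ s then (h x hx).choose else d x,
    fun x hx => by simpa only [dif_pos hx] using (h x hx).choose_spec⟩

section Alternating

variable {β X : Type*}

def AltStep (t : X → Set X → Prop) (S S' : Set X) : Prop :=
  ∃ f : X → Set X, (∀ x ∈ S, t x (f x)) ∧ S' = ⋃ x ∈ S, f x

inductive AltRun (t : β → X → Set X → Prop) : List β → Set X → Set X → Prop
  | nil (S : Set X) : AltRun t [] S S
  | cons {b : β} {w : List β} {S S₁ S₂ : Set X} :
      AltStep (t b) S S₁ → AltRun t w S₁ S₂ → AltRun t (b :: w) S S₂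

def AltAcc (t : β → X → Set X → Prop) (F : Set X) (w : List β) (S : Set X) : Prop :=
  ∃ E, AltRun t w S E ∧ E ⊆ F

variable {t : β → X → Set X → Prop} {F : Set X} {b : β} {w : List β} {S : Set X}

theorem altAcc_nil_iff : AltAcc t F [] S ↔ S ⊆ F :=
  ⟨fun ⟨_, h, hE⟩ => by cases h; exact hE, fun h => ⟨S, .nil S, h⟩⟩

theorem AltAcc.mono {S' : Set X} (h : AltAcc t F w S) (hS : S' ⊆ S) : AltAcc t F w S' := by
  induction w generalizing S S' with
  | nil => exact altAcc_nil_iff.2 (hS.trans (altAcc_nil_iff.1 h))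
  | cons b w ih =>
    obtain ⟨E, hrun, hE⟩ := h
    cases hrun with | cons hstep hrun =>
    obtain ⟨f, hf, rfl⟩ := hstep
    obtain ⟨E', hrun', hE'⟩ := ih ⟨E, hrun, hE⟩ (Set.biUnion_mono hS fun _ _ => subset_rfl)
    exact ⟨E', .cons ⟨f, fun x hx => hf x (hS hx), rfl⟩ hrun', hE'⟩

theorem AltAcc.exists_of_cons (h : AltAcc t F (b :: w) S) :
    ∀ x ∈ S, ∃ T, t b x T ∧ AltAcc t F w T := by
  obtain ⟨E, hrun, hE⟩ := h
  cases hrun with | cons hstep hrun =>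
  obtain ⟨f, hf, rfl⟩ := hstep
  exact fun x hx => ⟨f x, hf x hx, AltAcc.mono ⟨E, hrun, hE⟩ (Set.subset_biUnion_of_mem hx)⟩

theorem AltAcc.of_forall_singleton (h : ∀ x ∈ S, AltAcc t F w {x}) : AltAcc t F w S := by
  induction w generalizing S with
  | nil => exact altAcc_nil_iff.2 fun x hx => altAcc_nil_iff.1 (h x hx) rfl
  | cons b w ih =>
    obtain ⟨U, hU⟩ := exists_fun_of_forall_mem fun x hx => (h x hx).exists_of_cons x rfl
    obtain ⟨E, hrun, hE⟩ := ih (S := ⋃ x ∈ S, U x) <| by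
      simp only [Set.mem_iUnion₂]
      rintro y ⟨x, hx, hy⟩
      exact (hU x hx).2.mono (Set.singleton_subset_iff.2 hy)
    exact ⟨E, .cons ⟨U, fun x hx => (hU x hx).1, rfl⟩ hrun, hE⟩

theorem AltAcc.biUnion {ι : Type*} {I : Set ι} {T : ι → Set X}
    (h : ∀ i ∈ I, AltAcc t F w (T i)) : AltAcc t F w (⋃ i ∈ I, T i) :=
  AltAcc.of_forall_singleton fun x hx => by
    obtain ⟨i, hi, hx⟩ := Set.mem_iUnion₂.1 hx
    exact (h i hi).mono (Set.singleton_subset_iff.2 hx)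

theorem altAcc_cons_iff : AltAcc t F (b :: w) S ↔ ∀ x ∈ S, ∃ T, t b x T ∧ AltAcc t F w T := by
  refine ⟨AltAcc.exists_of_cons, fun h => ?_⟩
  obtain ⟨T, hT⟩ := exists_fun_of_forall_mem h
  obtain ⟨E, hrun, hE⟩ := AltAcc.biUnion fun x hx => (hT x hx).2
  exact ⟨E, .cons ⟨T, fun x hx => (hT x hx).1, rfl⟩ hrun, hE⟩

theorem altAcc_cons_singleton_iff {x : X} :
    AltAcc t F (b :: w) {x} ↔ ∃ T, t b x T ∧ AltAcc t F w T := by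
  simp only [altAcc_cons_iff, Set.mem_singleton_iff, forall_eq]

theorem AltAcc.mono_rel {t' : β → X → Set X → Prop} (ht : ∀ b x T, t b x T → t' b x T)
    (h : AltAcc t F w S) : AltAcc t' F w S := by
  induction w generalizing S with
  | nil => exact altAcc_nil_iff.2 (altAcc_nil_iff.1 h)
  | cons b w ih =>
    exact altAcc_cons_iff.2 fun x hx =>
      (altAcc_cons_iff.1 h x hx).imp fun T hT => ⟨ht _ _ _ hT.1, ih hT.2⟩

theorem AltAcc.exists_of_append {u : List β} (h : AltAcc t F (u ++ w) S) :
    ∃ M, AltRun t u S M ∧ AltAcc t F w M := by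
  induction u generalizing S with
  | nil => exact ⟨S, .nil S, h⟩
  | cons b u ih =>
    obtain ⟨E, hrun, hE⟩ := h
    cases hrun with | cons hstep hrun =>
    obtain ⟨M, hu, hw⟩ := ih ⟨E, hrun, hE⟩
    exact ⟨M, .cons hstep hu, hw⟩

end Alternating

section Runs

variable {α σB Q : Type}

/- `wrun` and `run2` are both runs of the form `AltRun`: an order-2 transition fires on a
1-store exactly when its label accepts that 1-store. -/
def label1 (Δ : Trans1 α σB Q) (a : α) (g : GQ σB Q) (T : Set (GQ σB Q)) : Prop :=
  (g, a, T) ∈ Δ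

def label2 (Δ1 : Trans1 α σB Q) (F : Set (GQ σB Q)) (Δ2 : Trans2 α σB Q) (γ : Store1 α)
    (q : Q) (T : Set Q) : Prop :=
  ∃ θ, (q, θ, T) ∈ Δ2 ∧ Acc1 Δ1 F θ γ

variable {Δ1 : Trans1 α σB Q} {F : Set (GQ σB Q)} {Δ2 : Trans2 α σB Q}

theorem wrun_iff_altRun {w : Store1 α} {S S' : Set (GQ σB Q)} :
    wrun Δ1 w S S' ↔ AltRun (label1 Δ1) w S S' := by
  constructor <;> intro h <;> induction h with
  | nil S => exact .nil S
  | cons hstep _ ih => exact .cons hstep ih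

theorem acc1_iff_altAcc {g : GQ σB Q} {w : Store1 α} :
    Acc1 Δ1 F g w ↔ AltAcc (label1 Δ1) F w {g} := by
  simp only [Acc1, AltAcc, wrun_iff_altRun]

theorem Acc1.mono {Δ1' : Trans1 α σB Q} (hΔ : Δ1 ⊆ Δ1') {g : GQ σB Q} {w : Store1 α}
    (h : Acc1 Δ1 F g w) : Acc1 Δ1' F g w :=
  acc1_iff_altAcc.2 ((acc1_iff_altAcc.1 h).mono_rel fun _ _ _ ht => hΔ ht)

theorem step2_iff_altStep {γ : Store1 α} {S S' : Set Q} :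
    step2 Δ1 F Δ2 γ S S' ↔ AltStep (label2 Δ1 F Δ2 γ) S S' := by
  constructor
  · rintro ⟨f, hf, rfl⟩
    exact ⟨fun q => (f q).2, fun q hq => ⟨(f q).1, hf q hq⟩, rfl⟩
  · rintro ⟨f, hf, rfl⟩
    have : Nonempty (Q → GQ σB Q) := ⟨fun q => .inr (0, q, ∅)⟩
    obtain ⟨θ, hθ⟩ := exists_fun_of_forall_mem hf
    exact ⟨fun q => (θ q, f q), hθ, rfl⟩

theorem run2_iff_altRun {ws : List (Store1 α)} {S S' : Set Q} :
    run2 Δ1 F Δ2 ws S S' ↔ AltRun (label2 Δ1 F Δ2) ws S S' := by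
  constructor <;> intro h
  · induction h with
    | nil S => exact .nil S
    | cons hstep _ ih => exact .cons (step2_iff_altStep.1 hstep) ih
  · induction h with
    | nil S => exact .nil S
    | cons hstep _ ih => exact .cons (step2_iff_altStep.2 hstep) ih

theorem exists_lstep_of_altAcc_cons {F2 : Set Q} {γ : Store1 α} {ws : List (Store1 α)}
    {S : Set Q} (h : AltAcc (label2 Δ1 F Δ2) F2 (γ :: ws) S) :
    ∃ θ S', lstep Δ2 S θ S' ∧ (∀ g ∈ θ, Acc1 Δ1 F g γ) ∧ AltAcc (label2 Δ1 F Δ2) F2 ws S' := by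
  obtain ⟨E, hrun, hE⟩ := h
  cases hrun with | cons hstep hrun =>
  obtain ⟨f, hf, rfl⟩ := step2_iff_altStep.2 hstep
  refine ⟨_, _, ⟨f, fun q hq => (hf q hq).1, rfl, rfl⟩, ?_, E, hrun, hE⟩
  rintro _ ⟨q, hq, rfl⟩
  exact (hf q hq).2

end Runs

section Saturation

variable {α P Q σB : Type} (su : Setup α P Q σB)

abbrev Acc1Set (i : ℕ) : Store1 α → Set (GQ σB Q) → Prop :=
  AltAcc (label1 (stage su i).Δ1) (F1 su)

abbrev Acc2Set (i : ℕ) : List (Store1 α) → Set Q → Prop :=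
  AltAcc (label2 (stage su i).Δ1 (F1 su) (Δ2At su i (stage su i).gdom)) su.F2

theorem acc2_iff {i : ℕ} {q : Q} {s : Store2 α} :
    Acc2 su i q s ↔ Acc2Set su i (s.1 :: s.2) {q} := by
  simp only [Acc2, Acc2Set, AltAcc, run2_iff_altRun]

theorem stage_Δ1_subset_succ (i : ℕ) : (stage su i).Δ1 ⊆ (stage su (i + 1)).Δ1 :=
  fun _ ht => Or.inl (Or.inl ht)

theorem liftB_subset_stage_Δ1 (i : ℕ) : liftB su.Δ1B ⊆ (stage su i).Δ1 := by
  induction i with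
  | zero => exact subset_rfl
  | succ i ih => exact ih.trans (stage_Δ1_subset_succ su i)

theorem inr_notMem_F1 (x : ℕ × Ident Q) : Sum.inr x ∉ F1 su := by
  rintro ⟨s, -, h⟩
  cases h

/-- `g^{i+1}_{(q₁,Q₂)}` inherits the transitions of `g^i_{(q₁,Q₂)}`. -/
theorem acc1_succ_of_mem_gdom {i : ℕ} {id : Ident Q} (hid : id ∈ (stage su i).gdom)
    {γ : Store1 α} (h : Acc1 (stage su i).Δ1 (F1 su) (.inr (i, id)) γ) :
    Acc1 (stage su (i + 1)).Δ1 (F1 su) (.inr (i + 1, id)) γ := by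
  rw [acc1_iff_altAcc] at h ⊢
  cases γ with
  | nil => exact absurd (altAcc_nil_iff.1 h rfl) (inr_notMem_F1 su _)
  | cons b v =>
    obtain ⟨T, hT, hv⟩ := altAcc_cons_singleton_iff.1 h
    refine altAcc_cons_singleton_iff.2 ⟨T, Or.inl (Or.inr ⟨id, Or.inl hid, b, T, hT, rfl⟩), ?_⟩
    exact hv.mono_rel fun _ _ _ ht => stage_Δ1_subset_succ su i ht

theorem label2_succ {i : ℕ} {γ : Store1 α} {q : Q} {T : Set Q}
    (h : label2 (stage su i).Δ1 (F1 su) (Δ2At su i (stage su i).gdom) γ q T) :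
    label2 (stage su (i + 1)).Δ1 (F1 su) (Δ2At su (i + 1) (stage su (i + 1)).gdom) γ q T := by
  obtain ⟨θ, hθ | ⟨id, hid, heq⟩, hacc⟩ := h
  · exact ⟨θ, Or.inl hθ, hacc.mono (stage_Δ1_subset_succ su i)⟩
  · obtain ⟨rfl, rfl, rfl⟩ := Prod.ext_iff.1 heq
    exact ⟨.inr (i + 1, id), Or.inr ⟨id, Or.inl hid, rfl⟩, acc1_succ_of_mem_gdom su hid hacc⟩

theorem acc2Set_succ {i : ℕ} {ws : List (Store1 α)} {S : Set Q} (h : Acc2Set su i ws S) :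
    Acc2Set su (i + 1) ws S :=
  h.mono_rel fun _ _ _ => label2_succ su

theorem langA_subset_succ (i : ℕ) : LangA su i ⊆ LangA su (i + 1) := by
  rintro c (⟨s, hs, hacc⟩ | h)
  · exact Or.inl ⟨s, hs, (acc2_iff su).2 (acc2Set_succ su ((acc2_iff su).1 hacc))⟩
  · exact Or.inr h

def ElemAcc (i : ℕ) (a : α) (w : Store1 α) (e : Elem α σB Q) : Prop :=
  ∃ T, ElemClause (stage su i).Δ1 a e T ∧ Acc1Set su i w T

theorem elemAcc_ref_iff {i : ℕ} {a : α} {w : Store1 α} {θ : GQ σB Q} :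
    ElemAcc su i a w (.ref θ) ↔ Acc1 (stage su i).Δ1 (F1 su) θ (a :: w) := by
  rw [acc1_iff_altAcc, altAcc_cons_singleton_iff]
  rfl

theorem elemAcc_ba (hwf : su.WF) (i : ℕ) (a : α) (w : Store1 α) :
    ElemAcc su i a w (.ref (.inl (su.ba a))) := by
  obtain ⟨-, -, -, -, -, -, -, hba⟩ := hwf
  exact (elemAcc_ref_iff su).2 (((hba a (a :: w)).2 rfl).mono (liftB_subset_stage_Δ1 su i))

/-- `(Qt, Selt)` witnesses that the pair `op` of a command `(p, a, OP)` contributes, via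
condition (2), to a new transition of `A_{i+1}` reading the 2-store `(a :: w, γ₂)`. -/
def ClauseWitness (i : ℕ) (p : P) (a : α) (w : Store1 α) (γ₂ : List (Store1 α))
    (op : Op2 α × P) (QS : Set Q × Set (Elem α σB Q)) : Prop :=
  Clause su i (stage su i) a p op QS.1 QS.2 ∧ (∀ e ∈ QS.2, ElemAcc su i a w e) ∧
    Acc2Set su i γ₂ QS.1

variable {su} {i : ℕ} {p p' : P} {a : α} {w : Store1 α} {γ₂ : List (Store1 α)}

theorem clauseWitness_pushw {u : List α} (h : Acc2 su i (su.qinit p') (u ++ w, γ₂)) :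
    ∃ QS, ClauseWitness su i p a w γ₂ (.pushw u, p') QS := by
  obtain ⟨T, ⟨θ, hθ, hacc⟩, hT⟩ := altAcc_cons_singleton_iff.1 ((acc2_iff su).1 h)
  obtain ⟨M, hu, hw⟩ := (acc1_iff_altAcc.1 hacc).exists_of_append
  refine ⟨(T, {.push a u θ}), ⟨θ, T, hθ, rfl, rfl⟩, ?_, hT⟩
  rintro _ rfl
  exact ⟨M, ⟨rfl, wrun_iff_altRun.2 hu⟩, hw⟩

theorem clauseWitness_push2 (hwf : su.WF)
    (h : Acc2 su i (su.qinit p') (a :: w, (a :: w) :: γ₂)) :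
    ∃ QS, ClauseWitness su i p a w γ₂ (.push2, p') QS := by
  obtain ⟨θ₁, Q', h₁, hθ₁, h⟩ := exists_lstep_of_altAcc_cons ((acc2_iff su).1 h)
  obtain ⟨θ₂, Qt, h₂, hθ₂, h⟩ := exists_lstep_of_altAcc_cons h
  refine ⟨(Qt, _), ⟨θ₁, θ₂, Q', h₁, h₂, rfl⟩, ?_, h⟩
  rintro _ (rfl | ⟨θ, hθ, rfl⟩ | ⟨θ, hθ, rfl⟩)
  · exact elemAcc_ba su hwf i a w
  · exact (elemAcc_ref_iff su).2 (hθ₁ θ hθ)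
  · exact (elemAcc_ref_iff su).2 (hθ₂ θ hθ)

theorem clauseWitness_pop2 (hwf : su.WF) (h : Acc2Set su i γ₂ {su.qinit p'}) :
    ∃ QS, ClauseWitness su i p a w γ₂ (.pop2, p') QS :=
  ⟨(_, _), ⟨rfl, Or.inl rfl⟩, by rintro _ rfl; exact elemAcc_ba su hwf i a w, h⟩

theorem clauseWitness_pop2_of_mem_nabla (hwf : su.WF) (h : su.qinit p ∈ su.nabla) :
    ∃ QS, ClauseWitness su i p a w [] (.pop2, p') QS :=
  ⟨(_, _), ⟨rfl, Or.inr ⟨h, rfl⟩⟩, by rintro _ rfl; exact elemAcc_ba su hwf i a w,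
    altAcc_nil_iff.2 (Set.singleton_subset_iff.2 hwf.1)⟩

theorem clauseWitness_of_successor (hwf : su.WF) (o : Op2 α)
    (hsucc : ∀ δ, o.apply (a :: w, γ₂) = some δ → Acc2 su i (su.qinit p') δ)
    (hnabla : o.apply (a :: w, γ₂) = none → su.qinit p ∈ su.nabla) :
    ∃ QS, ClauseWitness su i p a w γ₂ (o, p') QS := by
  cases o with
  | pushw u => exact clauseWitness_pushw (hsucc _ rfl)
  | push2 => exact clauseWitness_push2 hwf (hsucc _ rfl)
  | pop2 =>
    cases γ₂ with
    | nil => exact clauseWitness_pop2_of_mem_nabla hwf (hnabla rfl)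
    | cons r rs => exact clauseWitness_pop2 hwf ((acc2_iff su).1 (hsucc _ rfl))

/-- The new transition `q^p —G^{i+1}_{(q^p,Qs)}→ Qs` of `A_{i+1}`, with `Qs` and its element
set `S` assembled from the contributions of all pairs of the command. -/
theorem acc2_succ_of_clauseWitness {OP : Set (Op2 α × P)} (hD : (p, a, OP) ∈ su.D)
    (h : ∀ op ∈ OP, ∃ QS, ClauseWitness su i p a w γ₂ op QS) :
    Acc2 su (i + 1) (su.qinit p) (a :: w, γ₂) := by
  obtain ⟨f, hf⟩ := exists_fun_of_forall_mem h
  set Qs := ⋃ op ∈ OP, (f op).1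
  set S := ⋃ op ∈ OP, (f op).2
  have hrec : S ∈ NewRec su i (stage su i) (su.qinit p) Qs :=
    ⟨p, a, OP, hD, rfl, f, fun op hop => (hf op hop).1, rfl, rfl⟩
  have helem : ∀ e ∈ S, ElemAcc su i a w e := by
    simp only [S, Set.mem_iUnion₂]
    rintro e ⟨op, hop, he⟩
    exact (hf op hop).2.1 e he
  obtain ⟨T, hT⟩ := exists_fun_of_forall_mem helem
  have hg : Acc1 (stage su (i + 1)).Δ1 (F1 su) (.inr (i + 1, (su.qinit p, Qs))) (a :: w) := by
    refine acc1_iff_altAcc.2 (altAcc_cons_singleton_iff.2 ⟨_, ?_, AltAcc.biUnion fun e he =>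
      (hT e he).2.mono_rel fun _ _ _ ht => stage_Δ1_subset_succ su i ht⟩)
    exact Or.inr ⟨_, Or.inr ⟨S, hrec⟩, a, S, T, hrec, fun e he => (hT e he).1, rfl⟩
  have hrest : Acc2Set su (i + 1) γ₂ Qs :=
    acc2Set_succ su (AltAcc.biUnion fun op hop => (hf op hop).2.2)
  exact (acc2_iff su).2 (altAcc_cons_singleton_iff.2
    ⟨Qs, ⟨_, Or.inr ⟨(su.qinit p, Qs), Or.inr ⟨S, hrec⟩, rfl⟩, hg⟩, hrest⟩)

theorem mem_langA_succ_of_confStep (hwf : su.WF) {c : Conf P α} {C : Set (Conf P α)}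
    (h : ConfStep su.D c C) (hC : C ⊆ LangA su i) : c ∈ LangA su (i + 1) := by
  obtain ⟨p, ⟨γ₁, γ₂⟩, a, OP, rfl, hD, htop, rfl⟩ := h
  obtain ⟨w, rfl⟩ := List.head?_eq_some_iff.1 htop
  refine Or.inl ⟨_, rfl, acc2_succ_of_clauseWitness hD fun ⟨o, p'⟩ hop =>
    clauseWitness_of_successor hwf o (fun δ hδ => ?_) (fun hδ => ?_)⟩
  · obtain ⟨s, hs, hacc⟩ | ⟨hs, -⟩ := hC (Or.inl ⟨o, p', δ, hop, hδ, rfl⟩)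
    · cases hs
      exact hacc
    · cases hs
  · obtain ⟨s, hs, -⟩ | ⟨-, hnabla⟩ := hC (Or.inr ⟨⟨o, p', hop, hδ⟩, rfl⟩)
    · cases hs
    · exact hnabla

theorem subset_langA_succ_of_setStep (hwf : su.WF) {X Y : Set (Conf P α)}
    (h : SetStep su.D X Y) (hY : Y ⊆ LangA su i) : X ⊆ LangA su (i + 1) := by
  obtain ⟨c, C, C', hc, -, rfl, rfl⟩ := h
  exact Set.insert_subset (mem_langA_succ_of_confStep hwf hc (Set.subset_union_right.trans hY))
    ((Set.subset_union_left.trans hY).trans (langA_subset_succ su i))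

end Saturation

theorem saturation_complete_general
    (α P Q σB : Type)
    (su : Setup α P Q σB) (hwf : su.WF)
    (c : Conf P α) (hc : c ∈ PreStar su.D (LangA su 0)) :
    ∃ i, c ∈ LangA su i := by
  obtain ⟨C, hsteps, hsub⟩ := hc
  suffices ∀ X, Relation.ReflTransGen (SetStep su.D) X C → ∃ i, X ⊆ LangA su i by
    obtain ⟨i, hi⟩ := this {c} hsteps
    exact ⟨i, hi rfl⟩
  intro X hX
  induction hX using Relation.ReflTransGen.head_induction_on with
  | refl => exact ⟨0, hsub⟩
  | head hstep _ ih =>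
    obtain ⟨i, hi⟩ := ih
    exact ⟨i + 1, subset_langA_succ_of_setStep hwf hstep hi⟩

/-- Completeness of the saturation sequence.  Fix an order-2 APDS and a
2-store multi-automaton `A_0` with `L(A_0) = C_Init`, satisfying the well-formedness
assumptions, and let `A_0, A_1, …` be the saturation sequence `A_{i+1} = T_D(A_i)`.
For every configuration `⟨p, γ⟩ ∈ Pre*(C_Init)` there exists some `i` such that
`γ ∈ L(A_i^{q^p})`. -/
theorem saturation_complete
    (α P Q σB : Type) [Finite α] [Finite P] [Finite Q] [Finite σB]
    (su : Setup α P Q σB) (hwf : su.WF)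
    (hDfin : su.D.Finite) (hOPfin : ∀ x ∈ su.D, x.2.2.Finite)
    (c : Conf P α) (hc : c ∈ PreStar su.D (LangA su 0)) :
    ∃ i, c ∈ LangA su i :=
  saturation_complete_general α P Q σB su hwf c hc

end Order2
end

section
/- Monotonicity of the saturation sequence: (1) if g^i_{(q_1,Q_2)} —w→ Q is a run of G^i_{(q_1,Q_2)} for some i (with w ≠ ε), then g^{i+1}_{(q_1,Q_2)} —w→ Q is a run of G^{i+1}_{(q_1,Q_2)}; (2) every transition q —γ→ Q′ of A_i is a transition of A_{i+1}; (3) every run q —w→ Q′ of A_i is a run of A_{i+1}. In particular L(A_i) ⊆ L(A_{i+1}) for all i. -/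
namespace Order2


section Aux
variable {α P Q σB : Type} (su : Setup α P Q σB)

lemma wstep_mono {Δ Δ' : Trans1 α σB Q} (h : Δ ⊆ Δ') {a : α} {S S' : Set (GQ σB Q)} :
    wstep Δ a S S' → wstep Δ' a S S' :=
  fun ⟨f, hf, hS⟩ => ⟨f, fun g hg => h (hf g hg), hS⟩

lemma wrun_mono {Δ Δ' : Trans1 α σB Q} (h : Δ ⊆ Δ') {w : Store1 α}
    {S S' : Set (GQ σB Q)} (hr : wrun Δ w S S') : wrun Δ' w S S' := by
  induction hr with
  | nil S => exact wrun.nil S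
  | cons h1 _ ih => exact wrun.cons (wstep_mono h h1) ih

lemma stage_succ_gdom (i : ℕ) :
    (stage su (i+1)).gdom = NewDom su i (stage su i) := rfl

lemma stage_succ_Δ1 (i : ℕ) :
    (stage su (i+1)).Δ1 = TG (i+1) (NewDom su i (stage su i))
      (fun id => NewRec su i (stage su i) id.1 id.2) (stage su i).Δ1 := rfl

lemma Δ1_mono (i : ℕ) : (stage su i).Δ1 ⊆ (stage su (i+1)).Δ1 := by
  intro t ht
  rw [stage_succ_Δ1]
  exact Set.mem_union_left _ (Set.mem_union_left _ ht)

lemma gdom_mono (i : ℕ) : (stage su i).gdom ⊆ (stage su (i+1)).gdom := by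
  intro id hid
  rw [stage_succ_gdom]
  exact Set.mem_union_left _ hid

lemma source_inv (i : ℕ) : ∀ (k : ℕ) (id : Ident Q) (a : α) (T : Set (GQ σB Q)),
    (Sum.inr (k, id), a, T) ∈ (stage su i).Δ1 → k ≤ i ∧ id ∈ (stage su i).gdom := by
  induction i with
  | zero =>
    intro k id a T ht
    obtain ⟨s, a', T', _, heq⟩ := ht
    simp only [Prod.mk.injEq] at heq
    exact absurd heq.1 (by simp)
  | succ i ih =>
    intro k id a T ht
    rw [stage_succ_Δ1] at ht
    rcases ht with (ht | ht) | ht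
    · obtain ⟨hk, hd⟩ := ih k id a T ht
      exact ⟨hk.trans (Nat.le_succ i), gdom_mono su i hd⟩
    · obtain ⟨id', hid', a', T', _, heq⟩ := ht
      simp only [Prod.mk.injEq, Sum.inr.injEq] at heq
      obtain ⟨⟨hk, hid⟩, _, _⟩ := heq
      subst hk; subst hid
      exact ⟨le_refl _, hid'⟩
    · obtain ⟨id', hid', b, Se, f, _, _, heq⟩ := ht
      simp only [Prod.mk.injEq, Sum.inr.injEq] at heq
      obtain ⟨⟨hk, hid⟩, _, _⟩ := heq
      subst hk; subst hid
      exact ⟨le_refl _, hid'⟩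

lemma part1 (i : ℕ) (id : Ident Q) (w : Store1 α) (S : Set (GQ σB Q)) (hw : w ≠ [])
    (h : wrun (stage su i).Δ1 w {Sum.inr (i, id)} S) :
    wrun (stage su (i+1)).Δ1 w {Sum.inr (i+1, id)} S := by
  cases h with
  | nil => exact absurd rfl hw
  | @cons a w' _ S1 S2 h1 h2 =>
    obtain ⟨f, hf, hS1⟩ := h1
    have hmem := hf _ (Set.mem_singleton _)
    have hdom := (source_inv su i i id a _ hmem).2
    refine wrun.cons (S1 := S1) ?_ (wrun_mono (Δ1_mono su i) h2)
    refine ⟨fun _ => f (Sum.inr (i, id)), fun g hg => ?_, ?_⟩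
    · rw [Set.mem_singleton_iff] at hg; subst hg
      rw [stage_succ_Δ1]
      refine Set.mem_union_left _ (Set.mem_union_right _ ?_)
      exact ⟨id, Set.mem_union_left _ hdom, a, f (Sum.inr (i, id)),
        by simpa using hmem, rfl⟩
    · rw [hS1]; simp

lemma step2_lift (i : ℕ) (γ : Store1 α) (S Q' : Set Q)
    (h : step2 (stage su i).Δ1 (F1 su) (Δ2At su i (stage su i).gdom) γ S Q') :
    step2 (stage su (i+1)).Δ1 (F1 su) (Δ2At su (i+1) (stage su (i+1)).gdom) γ S Q' := by
  obtain ⟨f, hf, hQ'⟩ := h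
  refine ⟨fun q => (substGQ (i+1) i (f q).1, (f q).2), fun q hq => ?_, hQ'⟩
  obtain ⟨hmem, hacc⟩ := hf q hq
  rcases hmem with hmem | hmem
  · obtain ⟨q0, s, T, hB, heq⟩ := hmem
    simp only [Prod.mk.injEq] at heq
    obtain ⟨hq0, hfq⟩ := heq
    subst hq0
    constructor
    · refine Set.mem_union_left _ ⟨q, s, T, hB, ?_⟩
      simp [hfq, substGQ]
    · obtain ⟨Se, hr, hFe⟩ := hacc
      rw [hfq] at hr
      simp only [hfq, substGQ]
      exact ⟨Se, wrun_mono (Δ1_mono su i) hr, hFe⟩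
  · obtain ⟨id, hid, heq⟩ := hmem
    simp only [Prod.mk.injEq] at heq
    obtain ⟨hq0, hfq⟩ := heq
    subst hq0
    constructor
    · refine Set.mem_union_right _ ⟨id, gdom_mono su i hid, ?_⟩
      simp [hfq, substGQ]
    · obtain ⟨Se, hr, hFe⟩ := hacc
      rw [hfq] at hr
      simp only [hfq, substGQ, if_pos rfl]
      cases γ with
      | nil =>
        cases hr
        exact absurd (hFe (Set.mem_singleton _)) (by simp [F1])
      | cons a γ' =>
        exact ⟨Se, part1 su i id (a :: γ') Se (by simp) hr, hFe⟩

lemma run2_lift (i : ℕ) (w : List (Store1 α)) (S Q' : Set Q)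
    (h : run2 (stage su i).Δ1 (F1 su) (Δ2At su i (stage su i).gdom) w S Q') :
    run2 (stage su (i+1)).Δ1 (F1 su) (Δ2At su (i+1) (stage su (i+1)).gdom) w S Q' := by
  induction h with
  | nil S => exact run2.nil S
  | cons h1 _ ih => exact run2.cons (step2_lift su i _ _ _ h1) ih

end Aux

/-- Monotonicity of the saturation sequence.  Fix an order-2 APDS and a
well-formed 2-store multi-automaton `A_0`, with the saturation sequence
`A_{i+1} = T_D(A_i)` and the order-1 automata `G^i` (with states `g^i_{(q₁,Q₂)}`).  Then:
(1) every nonempty run `g^i_{(q₁,Q₂)} —w→ S` of `G^i_{(q₁,Q₂)}` yields the run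
    `g^{i+1}_{(q₁,Q₂)} —w→ S` of `G^{i+1}_{(q₁,Q₂)}`;
(2) every transition `q —γ→ Q'` of `A_i` is a transition of `A_{i+1}`;
(3) every run `q —w→ Q'` of `A_i` is a run of `A_{i+1}`;
and in particular `L(A_i) ⊆ L(A_{i+1})`. -/
theorem saturation_monotone
    (α P Q σB : Type) [Finite α] [Finite P] [Finite Q] [Finite σB]
    (su : Setup α P Q σB) (hwf : su.WF)
    (hDfin : su.D.Finite) (hOPfin : ∀ x ∈ su.D, x.2.2.Finite)
    (i : ℕ) :
    (∀ (id : Ident Q) (w : Store1 α) (S : Set (GQ σB Q)), w ≠ [] →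
        wrun (stage su i).Δ1 w {Sum.inr (i, id)} S →
        wrun (stage su (i + 1)).Δ1 w {Sum.inr (i + 1, id)} S) ∧
    (∀ (q : Q) (γ : Store1 α) (Q' : Set Q),
        step2 (stage su i).Δ1 (F1 su) (Δ2At su i (stage su i).gdom) γ {q} Q' →
        step2 (stage su (i + 1)).Δ1 (F1 su) (Δ2At su (i + 1) (stage su (i + 1)).gdom)
          γ {q} Q') ∧
    (∀ (q : Q) (w : List (Store1 α)) (Q' : Set Q),
        run2 (stage su i).Δ1 (F1 su) (Δ2At su i (stage su i).gdom) w {q} Q' →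
        run2 (stage su (i + 1)).Δ1 (F1 su) (Δ2At su (i + 1) (stage su (i + 1)).gdom)
          w {q} Q') ∧
    LangA su i ⊆ LangA su (i + 1) := by
  refine ⟨part1 su i, fun q γ Q' => step2_lift su i γ {q} Q',
    fun q w Q' => run2_lift su i w {q} Q', ?_⟩
  intro c hc
  rcases hc with ⟨s, h2, Se, hr, hF⟩ | ⟨h1, h2⟩
  · exact Or.inl ⟨s, h2, Se, run2_lift su i _ _ _ hr, hF⟩
  · exact Or.inr ⟨h1, h2⟩

end Order2
end

section
/- Order-2 fixed point: there exists i_1 > 0 such that G̃^i ≃ G̃^{i_1} for all i ≥ i_1; that is, from index i_1 onwards the order-2 transition structure of the automata A_i is constant and the identifier sets labelling corresponding transitions are equal up to the index substitution. -/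
/-!
Identifiers are only ever added and there are finitely many pairs `(q₁, Q₂)`, so the set of
identifiers of `A_i` is eventually constant, say from `N` on. The element sets of
`G̃^{k+1}` depend on `A_k` only through its identifiers and through the superscript `k` of
the identifier labels, so for `k ≥ N` the substitutions `[N/k]` and `[k/N]` move element
sets back and forth between `G̃^{k+1}` and `G̃^{N+1}`.
-/

namespace Order2

variable {α P Q σB : Type} (su : Setup α P Q σB)

lemma substGQ_mem_Δ2At {i : ℕ} (j : ℕ) {dom : Set (Ident Q)} {q : Q} {g : GQ σB Q}
    {T : Set Q} (h : (q, g, T) ∈ Δ2At su i dom) : (q, substGQ j i g, T) ∈ Δ2At su j dom := by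
  rcases h with ⟨q', s, T', hmem, heq⟩ | ⟨id, hid, heq⟩
  · obtain ⟨rfl, rfl, rfl⟩ : q = q' ∧ g = Sum.inl s ∧ T = T' := by
      simpa [Prod.ext_iff] using heq
    exact Or.inl ⟨_, _, _, hmem, rfl⟩
  · obtain ⟨rfl, rfl, rfl⟩ : q = id.1 ∧ g = Sum.inr (i, id) ∧ T = id.2 := by
      simpa [Prod.ext_iff] using heq
    exact Or.inr ⟨id, hid, by simp [substGQ]⟩

lemma lstep_substGQ {i : ℕ} (j : ℕ) {dom : Set (Ident Q)} {S : Set Q}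
    {θ : Set (GQ σB Q)} {S' : Set Q} (h : lstep (Δ2At su i dom) S θ S') :
    lstep (Δ2At su j dom) S (substGQ j i '' θ) S' := by
  obtain ⟨f, hf, rfl, rfl⟩ := h
  exact ⟨fun q => (substGQ j i (f q).1, (f q).2), fun q hq => substGQ_mem_Δ2At su j (hf q hq),
    by rw [Set.image_image], rfl⟩

lemma Clause.subst {i : ℕ} (j : ℕ) {st st' : Stage α σB Q} (hdom : st.gdom = st'.gdom)
    {a : α} {p : P} {op : Op2 α × P} {Qt : Set Q} {Selt : Set (Elem α σB Q)}
    (h : Clause su i st a p op Qt Selt) : Clause su j st' a p op Qt (substS j i Selt) := by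
  obtain ⟨o, p'⟩ := op
  cases o with
  | push2 =>
      obtain ⟨θ1, θ2, Q', h1, h2, rfl⟩ := h
      refine ⟨substGQ j i '' θ1, substGQ j i '' θ2, Q',
        hdom ▸ lstep_substGQ su j h1, hdom ▸ lstep_substGQ su j h2, ?_⟩
      simp only [substS, Set.image_insert_eq, Set.image_union, Set.image_image]
      rfl
  | pop2 =>
      obtain ⟨rfl, hQ⟩ := h
      exact ⟨by simp only [substS, Set.image_singleton]; rfl, hQ⟩
  | pushw w =>
      obtain ⟨θ, T, hmem, hQ, rfl⟩ := h
      exact ⟨substGQ j i θ, T, hdom ▸ substGQ_mem_Δ2At su j hmem, hQ,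
        by simp only [substS, Set.image_singleton]; rfl⟩

lemma substS_mem_NewRec {i : ℕ} (j : ℕ) {st st' : Stage α σB Q} (hdom : st.gdom = st'.gdom)
    {q : Q} {Qs : Set Q} {S : Set (Elem α σB Q)} (h : S ∈ NewRec su i st q Qs) :
    substS j i S ∈ NewRec su j st' q Qs := by
  obtain ⟨p, a, OP, hD, hq, f, hf, hQ, rfl⟩ := h
  exact ⟨p, a, OP, hD, hq, fun op => ((f op).1, substS j i (f op).2),
    fun op hop => (hf op hop).subst su j hdom, hQ, by simp only [substS, Set.image_iUnion]⟩

lemma monotone_gdom : Monotone fun i => (stage su i).gdom :=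
  monotone_nat_of_le_succ fun _ => Set.subset_union_left

lemma exists_gdom_eventually_const [Finite Q] :
    ∃ N, ∀ i, N ≤ i → (stage su i).gdom = (stage su N).gdom := by
  obtain ⟨N, hN⟩ := WellFoundedGT.monotone_chain_condition ⟨_, monotone_gdom su⟩
  exact ⟨N, fun i hi => (hN i hi).symm⟩

theorem order2_fixed_point_general
    (α P Q σB : Type) [Finite Q]
    (su : Setup α P Q σB) :
    ∃ i1 : ℕ, 0 < i1 ∧ ∀ i, i1 ≤ i → SimeqAt su i1 i := by
  obtain ⟨N, hN⟩ := exists_gdom_eventually_const su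
  refine ⟨N + 1, N.succ_pos, fun i hi => ?_⟩
  obtain ⟨k, rfl⟩ : ∃ k, i = k + 1 := ⟨i - 1, by omega⟩
  have hk : (stage su k).gdom = (stage su N).gdom := hN k (by omega)
  exact ⟨by rw [hN (k + 1) (by omega), hN (N + 1) (by omega)],
    fun _ _ => ⟨fun _ => substS_mem_NewRec su N hk, fun _ => substS_mem_NewRec su k hk.symm⟩⟩

/-- Order-2 fixed point.  Fix an order-2 APDS and a well-formed 2-store
multi-automaton `A_0`, with the saturation sequence `A_{i+1} = T_D(A_i)` and the
associated identifier sets `G̃^i`.  There exists `i₁ > 0` such that `G̃^i ≃ G̃^{i₁}` for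
all `i ≥ i₁`: from index `i₁` onwards the order-2 transition structure of the `A_i` is
constant, and the identifier sets labelling corresponding transitions are equal up to the
index substitution. -/
theorem order2_fixed_point
    (α P Q σB : Type) [Finite α] [Finite P] [Finite Q] [Finite σB]
    (su : Setup α P Q σB) (hwf : su.WF)
    (hDfin : su.D.Finite) (hOPfin : ∀ x ∈ su.D, x.2.2.Finite) :
    ∃ i1 : ℕ, 0 < i1 ∧ ∀ i, i1 ≤ i → SimeqAt su i1 i :=
  order2_fixed_point_general α P Q σB su

end Order2
end
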